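/- Let (Ω, 𝔉, P) be a probability space equipped with a measurable action τ of ℝ^d under which P is stationary, and let 𝓘 ⊆ 𝔉 be the sub-σ-algebra of invariant sets. Let F ∈ L¹(Ω, P), e ∈ ℝ^d with e ≠ 0, and suppose there exists G ∈ L¹(Ω, P) such that ‖ h^{-1}(F ∘ τ(he, ·) − F) − G ‖_{L¹(P)} → 0 as h → 0. Then the conditional expectation of G with respect to 𝓘 vanishes: E[G | 𝓘] = 0 P-almost surely. -/

import Mathlib

open MeasureTheory Filter
open scoped Topology

/-- The σ-algebra of sets invariant under the action `τ` of `ℝ^d`. -/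
def invariantSigma {Ω : Type*} [MeasurableSpace Ω] {d : ℕ}
    (τ : (Fin d → ℝ) → Ω → Ω) : MeasurableSpace Ω where
  MeasurableSet' A := MeasurableSet A ∧ ∀ x, τ x ⁻¹' A = A
  measurableSet_empty := ⟨MeasurableSet.empty, fun _ => Set.preimage_empty⟩
  measurableSet_compl := fun A hA =>
    ⟨hA.1.compl, fun x => by rw [Set.preimage_compl, hA.2 x]⟩
  measurableSet_iUnion := fun f hf =>
    ⟨MeasurableSet.iUnion fun i => (hf i).1, fun x => by
      rw [Set.preimage_iUnion]
      exact Set.iUnion_congr fun i => (hf i).2 x⟩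

/-!
Integrating over an invariant set `A` commutes with the stationary shifts, so every difference
quotient `h⁻¹(F ∘ τ_{he} - F)` has integral `0` over `A`. Passing to the `L¹` limit, `G` has
integral `0` over every invariant set, which characterises `E[G | 𝓘] = 0`.
-/

namespace MeasureTheory

theorem condExp_ae_eq_zero_of_forall_setIntegral_eq_zero {Ω : Type*}
    {m m₀ : MeasurableSpace Ω} {μ : Measure[m₀] Ω} (hm : m ≤ m₀) [SigmaFinite (μ.trim hm)]
    {g : Ω → ℝ} (hg : Integrable g μ) (hg_zero : ∀ s, MeasurableSet[m] s → ∫ ω in s, g ω ∂μ = 0) :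
    μ[g|m] =ᵐ[μ] 0 :=
  (ae_eq_condExp_of_forall_setIntegral_eq hm hg (fun _ _ _ => integrableOn_zero)
    (fun s hs _ => by rw [hg_zero s hs, integral_zero]) aestronglyMeasurable_zero).symm

variable {Ω : Type*} [MeasurableSpace Ω] {μ : Measure Ω}

theorem setIntegral_eq_zero_of_tendsto_integral_abs_sub {ι : Type*} {l : Filter ι} [l.NeBot]
    {f : ι → Ω → ℝ} {g : Ω → ℝ} {s : Set Ω}
    (hf : ∀ᶠ i in l, Integrable (f i) μ ∧ ∫ ω in s, f i ω ∂μ = 0) (hg : Integrable g μ)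
    (hlim : Tendsto (fun i => ∫ ω, |f i ω - g ω| ∂μ) l (𝓝 0)) :
    ∫ ω in s, g ω ∂μ = 0 := by
  have hbound : ∀ᶠ i in l, |∫ ω in s, g ω ∂μ| ≤ ∫ ω, |f i ω - g ω| ∂μ := by
    filter_upwards [hf] with i ⟨hfi, hfi_zero⟩
    calc |∫ ω in s, g ω ∂μ| = |∫ ω in s, (f i ω - g ω) ∂μ| := by
          rw [integral_sub hfi.integrableOn hg.integrableOn, hfi_zero, zero_sub, abs_neg]
      _ ≤ ∫ ω in s, |f i ω - g ω| ∂μ := abs_integral_le_integral_abs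
      _ ≤ ∫ ω, |f i ω - g ω| ∂μ :=
          setIntegral_le_integral (hfi.sub hg).abs (Eventually.of_forall fun _ => abs_nonneg _)
  exact abs_nonpos_iff.mp (ge_of_tendsto hlim hbound)

theorem MeasurePreserving.setIntegral_comp_of_preimage_eq {T : Ω → Ω}
    (hT : MeasurePreserving T μ μ) {s : Set Ω} (hs : MeasurableSet s) (hTs : T ⁻¹' s = s)
    {F : Ω → ℝ} (hF : AEStronglyMeasurable F μ) :
    ∫ ω in s, F (T ω) ∂μ = ∫ ω in s, F ω ∂μ := by
  have hTs_pres : MeasurePreserving T (μ.restrict s) (μ.restrict s) := by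
    simpa only [hTs] using hT.restrict_preimage hs
  have hF_map : AEStronglyMeasurable F ((μ.restrict s).map T) := by
    rw [hTs_pres.map_eq]
    exact hF.restrict
  rw [← integral_map hT.measurable.aemeasurable hF_map, hTs_pres.map_eq]

theorem MeasurePreserving.setIntegral_sub_comp_eq_zero_of_preimage_eq {T : Ω → Ω}
    (hT : MeasurePreserving T μ μ) {s : Set Ω} (hs : MeasurableSet s) (hTs : T ⁻¹' s = s)
    {F : Ω → ℝ} (hF : Integrable F μ) :
    ∫ ω in s, (F (T ω) - F ω) ∂μ = 0 := by
  have hFT : Integrable (fun ω => F (T ω)) μ := hT.integrable_comp_of_integrable hF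
  rw [integral_sub hFT.integrableOn hF.integrableOn,
    hT.setIntegral_comp_of_preimage_eq hs hTs hF.aestronglyMeasurable, sub_self]

end MeasureTheory

theorem condExp_generator_eq_zero_general
    {Ω : Type*} [MeasurableSpace Ω] {d : ℕ}
    (τ : (Fin d → ℝ) → Ω → Ω)
    (hτ_meas : Measurable fun q : (Fin d → ℝ) × Ω => τ q.1 q.2)
    (P : Measure Ω) [IsProbabilityMeasure P]
    (hstat : ∀ x : Fin d → ℝ, Measure.map (τ x) P = P)
    (F G : Ω → ℝ) (hF : Integrable F P) (hG : Integrable G P)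
    (e : Fin d → ℝ)
    (hconv : Tendsto (fun h : ℝ => ∫ ω, |(F (τ (h • e) ω) - F ω) / h - G ω| ∂P)
      (𝓝[≠] 0) (𝓝 0)) :
    P[G|invariantSigma τ] =ᵐ[P] 0 := by
  have hm : invariantSigma τ ≤ ‹MeasurableSpace Ω› := fun _ hA => hA.1
  have hτ_pres : ∀ x, MeasurePreserving (τ x) P P := fun x =>
    ⟨hτ_meas.of_uncurry_left, hstat x⟩
  refine condExp_ae_eq_zero_of_forall_setIntegral_eq_zero hm hG fun A ⟨hA, hA_inv⟩ => ?_
  refine setIntegral_eq_zero_of_tendsto_integral_abs_sub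
    (Eventually.of_forall fun h => ?_) hG hconv
  refine ⟨(((hτ_pres _).integrable_comp_of_integrable hF).sub hF).div_const h, ?_⟩
  rw [integral_div, (hτ_pres _).setIntegral_sub_comp_eq_zero_of_preimage_eq hA (hA_inv _) hF,
    zero_div]

/-- If `P` is stationary under a measurable `ℝ^d`-action `τ` and `G ∈ L¹` is the `L¹`-limit of
the difference quotients `h⁻¹(F ∘ τ_{he} - F)` of some `F ∈ L¹` along a direction `e ≠ 0`,
then the conditional expectation of `G` with respect to the invariant σ-algebra vanishes
`P`-almost surely. -/
theorem condExp_generator_eq_zero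
    {Ω : Type*} [MeasurableSpace Ω] {d : ℕ}
    (τ : (Fin d → ℝ) → Ω → Ω)
    (hτ_meas : Measurable fun q : (Fin d → ℝ) × Ω => τ q.1 q.2)
    (hτ_zero : τ 0 = id)
    (hτ_add : ∀ x y : Fin d → ℝ, τ (x + y) = τ x ∘ τ y)
    (P : Measure Ω) [IsProbabilityMeasure P]
    (hstat : ∀ x : Fin d → ℝ, Measure.map (τ x) P = P)
    (F G : Ω → ℝ) (hF : Integrable F P) (hG : Integrable G P)
    (e : Fin d → ℝ) (he : e ≠ 0)
    (hconv : Tendsto (fun h : ℝ => ∫ ω, |(F (τ (h • e) ω) - F ω) / h - G ω| ∂P)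
      (𝓝[≠] 0) (𝓝 0)) :
    P[G|invariantSigma τ] =ᵐ[P] 0 :=
  condExp_generator_eq_zero_general τ hτ_meas P hstat F G hF hG e hconv
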